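/- Let f(x) = A_f^h x^d be a homogeneous polynomial of degree d with A_f^h ∈ S^{d,n}, and let Ā ∈ S^{d,n+1} be the zero-padding of A_f^h. If min f(x) over x ∈ F has an optimal solution, then its optimal value equals the optimal value of the completely positive program: minimize ⟨Ā, X⟩ subject to X ∈ CP_{n+1,d}, ⟨X, M_d(a)⟩ = 1, and X ×₁A ×₂A ⋯ ×_d A ∈ CP_{m+n+1,d}. -/

import Mathlib

/-!
Homogenizing the minimizer `x̄` to `y = (x̄, 1 - αᵀx̄)` gives the feasible rank-one tensor `M_d(y)`
of value `f(x̄)`. Conversely, since the last `n + 1` rows of `A` form the identity, a completely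
positive decomposition `∑ⱼ M_d(wⱼ)` of `X ×₁ A ⋯ ×_d A` restricts to `X = ∑ⱼ M_d(vⱼ)`; for `d ≥ 2`,
contracting with `u ⊗ u ⊗ 1 ⊗ ⋯ ⊗ 1` for `u ∈ ker Aᵀ` shows that every `wⱼ` lies in the range of
`A`, so `A vⱼ = wⱼ ≥ 0`. Writing `vⱼ = (z, ·)` and `λ = aᵀvⱼ`, this says `z ≥ 0` and `Bz ≤ λb`:
either `z / λ ∈ F`, or `λ = 0` and `z` is a recession direction of `F`. Homogeneity and the
optimality of `x̄` (along the ray `x̄ + μz` in the second case) give `f(z) ≥ λ^d f(x̄)`, and summing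
with `∑ⱼ λⱼ^d = ⟨X, M_d(a)⟩ = 1` gives `⟨Ā, X⟩ ≥ f(x̄)`.
-/

open Finset Matrix Pointwise

noncomputable section

/-- An order-`d`, dimension-`n` real tensor: entries indexed by `Fin d → Fin n`. -/
abbrev Tensor (d n : ℕ) : Type := (Fin d → Fin n) → ℝ

/-- Entrywise inner product of two tensors. -/
def tInner {d n : ℕ} (A B : Tensor d n) : ℝ := ∑ i : Fin d → Fin n, A i * B i

/-- `Md d x` is the `d`-fold symmetric outer product of the vector `x`. -/
def Md {n : ℕ} (d : ℕ) (x : Fin n → ℝ) : Tensor d n := fun i => ∏ t, x (i t)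

/-- A tensor is symmetric if its entries are invariant under permutations of the indices. -/
def IsSymT {d n : ℕ} (A : Tensor d n) : Prop :=
  ∀ (σ : Equiv.Perm (Fin d)) (i : Fin d → Fin n), A (i ∘ σ) = A i

/-- The recession cone of a set `F`. -/
def recCone {n : ℕ} (F : Set (Fin n → ℝ)) : Set (Fin n → ℝ) :=
  {y | ∀ x ∈ F, ∀ lam : ℝ, 0 ≤ lam → x + lam • y ∈ F}

/-- Mode product `X ×₁ D ×₂ D ⋯ ×_d D` of a tensor with the matrix `D` on every mode. -/
def modeProd {d n p : ℕ} (X : Tensor d n) (D : Matrix (Fin p) (Fin n) ℝ) : Tensor d p :=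
  fun i => ∑ j : Fin d → Fin n, X j * ∏ t, D (i t) (j t)

/-- The cone of completely positive tensors of order `d` and dimension `n`. -/
def CP (d n : ℕ) : Set (Tensor d n) :=
  {X | ∃ (k : ℕ) (y : Fin k → (Fin n → ℝ)), (∀ i j, 0 ≤ y i j) ∧ X = ∑ i, Md d (y i)}

/-- A tensor is copositive if `A x^d ≥ 0` for all entrywise nonnegative `x`. -/
def Copos {d n : ℕ} (A : Tensor d n) : Prop :=
  ∀ x : Fin n → ℝ, (∀ j, 0 ≤ x j) → 0 ≤ tInner A (Md d x)

/-- The subtensor of `X` obtained by restricting all indices to the last `n` coordinates. -/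
def restr {d n : ℕ} (X : Tensor d (n+1)) : Tensor d n :=
  fun i => X (fun t => Fin.succ (i t))

def outerProd {d n : ℕ} (U : Fin d → Fin n → ℝ) : Tensor d n := fun i => ∏ t, U t (i t)

section Tensor

variable {d n p : ℕ}

lemma tInner_comm (S T : Tensor d n) : tInner S T = tInner T S :=
  Finset.sum_congr rfl fun _ _ => mul_comm _ _

lemma tInner_sum_left {k : ℕ} (S : Fin k → Tensor d n) (T : Tensor d n) :
    tInner (∑ j, S j) T = ∑ j, tInner (S j) T := by
  simp only [tInner, Finset.sum_apply, Finset.sum_mul]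
  exact Finset.sum_comm

lemma tInner_Md_outerProd (w : Fin n → ℝ) (U : Fin d → Fin n → ℝ) :
    tInner (Md d w) (outerProd U) = ∏ t, w ⬝ᵥ U t := by
  simp only [tInner, Md, outerProd, dotProduct, ← Finset.prod_mul_distrib]
  exact (Fintype.prod_sum fun t x => w x * U t x).symm

lemma tInner_Md_Md (v w : Fin n → ℝ) : tInner (Md d v) (Md d w) = (v ⬝ᵥ w) ^ d := by
  have h := tInner_Md_outerProd (d := d) v fun _ => w
  rwa [Finset.prod_const, Finset.card_univ, Fintype.card_fin] at h

lemma modeProd_Md (v : Fin n → ℝ) (D : Matrix (Fin p) (Fin n) ℝ) :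
    modeProd (Md d v) D = Md d (D *ᵥ v) := by
  funext i
  simp only [modeProd, Md, mulVec, dotProduct, ← Finset.prod_mul_distrib]
  exact (Fintype.prod_sum fun t x => v x * D (i t) x).symm.trans
    (Finset.prod_congr rfl fun _ _ => Finset.sum_congr rfl fun _ _ => mul_comm _ _)

lemma tInner_modeProd_outerProd (X : Tensor d n) (D : Matrix (Fin p) (Fin n) ℝ)
    (U : Fin d → Fin p → ℝ) :
    tInner (modeProd X D) (outerProd U) = tInner X (outerProd fun t => Dᵀ *ᵥ U t) := by
  simp only [tInner, modeProd, outerProd, mulVec, dotProduct, transpose_apply, Finset.sum_mul,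
    mul_assoc, ← Finset.prod_mul_distrib]
  rw [Finset.sum_comm]
  refine Finset.sum_congr rfl fun j _ => ?_
  rw [← Finset.mul_sum]
  exact congrArg _ (Fintype.prod_sum fun t r => D r (j t) * U t r).symm

lemma outerProd_eq_zero {U : Fin d → Fin n → ℝ} {t : Fin d} (ht : U t = 0) : outerProd U = 0 :=
  funext fun _ => Finset.prod_eq_zero (Finset.mem_univ t) (by simp [ht])

lemma tInner_zero_right (X : Tensor d n) : tInner X 0 = 0 := by
  simp [tInner]

lemma tInner_Md_smul (T : Tensor d n) (c : ℝ) (x : Fin n → ℝ) :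
    tInner T (Md d (c • x)) = c ^ d * tInner T (Md d x) := by
  simp only [tInner, Md, Pi.smul_apply, smul_eq_mul, Finset.prod_mul_distrib, Finset.prod_const,
    Finset.card_univ, Fintype.card_fin, Finset.mul_sum]
  exact Finset.sum_congr rfl fun _ _ => by ring

lemma continuous_tInner_Md (T : Tensor d n) : Continuous fun x : Fin n → ℝ => tInner T (Md d x) :=
  continuous_finsetSum _ fun _ _ =>
    continuous_const.mul (continuous_finsetProd _ fun _ _ => continuous_apply _)

lemma Md_mem_CP {x : Fin n → ℝ} (hx : 0 ≤ x) : Md d x ∈ CP d n :=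
  ⟨1, fun _ => x, fun _ => hx, (Fin.sum_univ_one fun _ => Md d x).symm⟩

end Tensor

lemma tInner_zeroPad_Md {d n : ℕ} {T : Tensor d n} {Tbar : Tensor d (n+1)}
    (hT : ∀ i : Fin d → Fin (n+1),
      Tbar i = if h : ∀ t, ((i t : ℕ) < n) then T (fun t => ⟨i t, h t⟩) else 0)
    (v : Fin (n+1) → ℝ) :
    tInner Tbar (Md d v) = tInner T (Md d (Fin.init v)) := by
  refine (Fintype.sum_of_injective (Fin.castSucc ∘ ·) ?_ _ _ (fun i hi => ?_) fun i => ?_).symm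
  · exact fun i j h => funext fun t => Fin.castSucc_injective _ (congrFun h t)
  · rw [hT, dif_neg, zero_mul]
    exact fun h => hi ⟨fun t => ⟨i t, h t⟩, rfl⟩
  · rw [hT, dif_pos (show ∀ t, ((Fin.castSucc ∘ i) t : ℕ) < n from fun t => (i t).isLt)]
    rfl

/-- Contracting `∑ⱼ wⱼ^{⊗d}` with `u ⊗ u ⊗ 1 ⊗ ⋯ ⊗ 1` gives `∑ⱼ (wⱼ ⬝ u)² (wⱼ ⬝ 1)^{d-2}`, a sum
of nonnegative terms; for a mode product with `D` it vanishes as soon as `Dᵀ u = 0`. -/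
lemma dotProduct_eq_zero_of_modeProd_eq_sum_Md {d n p l : ℕ} (hd : 2 ≤ d) {X : Tensor d n}
    {D : Matrix (Fin p) (Fin n) ℝ} {w : Fin l → Fin p → ℝ} (hw : ∀ j, 0 ≤ w j)
    (hX : modeProd X D = ∑ j, Md d (w j)) {u : Fin p → ℝ} (hu : Dᵀ *ᵥ u = 0) (j : Fin l) :
    w j ⬝ᵥ u = 0 := by
  obtain ⟨e, rfl⟩ : ∃ e, d = e + 2 := ⟨d - 2, by omega⟩
  set U : Fin (e + 2) → Fin p → ℝ := Fin.cons u (Fin.cons u fun _ => 1)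
  have hsum : ∑ j, (w j ⬝ᵥ u) ^ 2 * (w j ⬝ᵥ 1) ^ e = 0 := by
    have h := tInner_modeProd_outerProd X D U
    rw [outerProd_eq_zero (U := fun t => Dᵀ *ᵥ U t) (t := 0) (by simpa [U] using hu),
      tInner_zero_right, hX, tInner_sum_left] at h
    simpa [tInner_Md_outerProd, Fin.prod_univ_succ, U, sq, mul_assoc] using h
  have hterm := (Finset.sum_eq_zero_iff_of_nonneg fun j _ => mul_nonneg (sq_nonneg _)
    (pow_nonneg (dotProduct_nonneg_of_nonneg (hw j) zero_le_one) e)).mp hsum j (Finset.mem_univ j)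
  rcases mul_eq_zero.mp hterm with h | h
  · exact pow_eq_zero_iff two_ne_zero |>.mp h
  · have hwj : w j = 0 := funext fun r => by
      simpa [dotProduct] using (Finset.sum_eq_zero_iff_of_nonneg fun r _ => hw j r).mp
        (by simpa [dotProduct] using pow_eq_zero_iff' |>.mp h |>.1) r (Finset.mem_univ r)
    simp [hwj]

section IdentityBlock

variable {d m k : ℕ} {D : Matrix (Fin (m + k)) (Fin k) ℝ}

lemma mulVec_natAdd_of_identity_block
    (hD : ∀ i j : Fin k, D (Fin.natAdd m i) j = if i = j then 1 else 0)
    (v : Fin k → ℝ) (x : Fin k) :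
    (D *ᵥ v) (Fin.natAdd m x) = v x := by
  simp [mulVec, dotProduct, hD]

lemma modeProd_natAdd_of_identity_block
    (hD : ∀ i j : Fin k, D (Fin.natAdd m i) j = if i = j then 1 else 0) (X : Tensor d k)
    (i : Fin d → Fin k) :
    modeProd X D (Fin.natAdd m ∘ i) = X i := by
  have hprod : ∀ j, ∏ t, D (Fin.natAdd m (i t)) (j t) = if i = j then 1 else 0 := fun j => by
    simp [hD, Finset.prod_boole, funext_iff]
  simp [modeProd, hprod]

/-- With `C` the top block of `D`, the residual `r = w - D (w ∘ natAdd)` vanishes on the identity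
block, and `u = (r_top, -Cᵀ r_top)` lies in `ker Dᵀ` with `r ⬝ u = ‖r_top‖²`. -/
lemma mulVec_natAdd_eq_of_dotProduct_eq_zero
    (hD : ∀ i j : Fin k, D (Fin.natAdd m i) j = if i = j then 1 else 0) {w : Fin (m + k) → ℝ}
    (hw : ∀ u, Dᵀ *ᵥ u = 0 → w ⬝ᵥ u = 0) :
    D *ᵥ (w ∘ Fin.natAdd m) = w := by
  set r := w - D *ᵥ (w ∘ Fin.natAdd m)
  have hr_bot : ∀ x, r (Fin.natAdd m x) = 0 := fun x => by
    simp [r, mulVec_natAdd_of_identity_block hD]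
  set u : Fin (m + k) → ℝ := Fin.append (r ∘ Fin.castAdd k)
    (-((r ∘ Fin.castAdd k) ᵥ* D.submatrix (Fin.castAdd k) id))
  have hu : Dᵀ *ᵥ u = 0 := by
    funext x
    simp [u, mulVec, vecMul, dotProduct, Fin.sum_univ_add, hD, mul_comm]
  have hru : r ⬝ᵥ u = ∑ i, r (Fin.castAdd k i) ^ 2 := by
    simp [dotProduct, Fin.sum_univ_add, hr_bot, u, sq]
  have hr_zero : r ⬝ᵥ u = 0 := by
    rw [sub_dotProduct, hw u hu, dotProduct_comm, dotProduct_mulVec, ← mulVec_transpose, hu]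
    simp
  have hr_top : ∀ i, r (Fin.castAdd k i) = 0 := fun i => by
    rw [hru] at hr_zero
    exact pow_eq_zero_iff two_ne_zero |>.mp
      ((Finset.sum_eq_zero_iff_of_nonneg fun _ _ => sq_nonneg _).mp hr_zero i (Finset.mem_univ i))
  exact (sub_eq_zero.mp (funext fun r' => Fin.addCases hr_top hr_bot r')).symm

lemma eq_sum_Md_natAdd_of_modeProd_eq
    (hD : ∀ i j : Fin k, D (Fin.natAdd m i) j = if i = j then 1 else 0) {X : Tensor d k} {l : ℕ}
    {w : Fin l → Fin (m + k) → ℝ} (hX : modeProd X D = ∑ j, Md d (w j)) :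
    X = ∑ j, Md d (w j ∘ Fin.natAdd m) := by
  funext i
  rw [← modeProd_natAdd_of_identity_block hD X i, hX]
  simp [Finset.sum_apply, Md]

lemma exists_eq_sum_Md_of_modeProd_mem_CP
    (hD : ∀ i j : Fin k, D (Fin.natAdd m i) j = if i = j then 1 else 0) {X : Tensor d k}
    (hX : modeProd X D ∈ CP d (m + k)) :
    ∃ (l : ℕ) (v : Fin l → Fin k → ℝ), (∀ j, 0 ≤ D *ᵥ v j) ∧ X = ∑ j, Md d (v j) := by
  obtain ⟨l, w, hw, hXw⟩ := hX
  have hXv := eq_sum_Md_natAdd_of_modeProd_eq hD hXw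
  rcases (by omega : d = 0 ∨ d = 1 ∨ 2 ≤ d) with rfl | rfl | hd
  · exact ⟨l, 0, fun _ => by simp, hXv.trans (Finset.sum_congr rfl fun _ _ => by unfold Md; simp)⟩
  · set x := ∑ j, w j ∘ Fin.natAdd m
    have hXx : X = Md 1 x := hXv.trans (by funext i; simp [Md, x, Finset.sum_apply])
    refine ⟨1, fun _ => x, fun _ r => ?_, by simpa using hXx⟩
    have h := congrFun hXw fun _ => r
    rw [hXx, modeProd_Md] at h
    simp only [Md, Finset.univ_unique, Finset.prod_singleton, Finset.sum_apply] at h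
    exact h ▸ Finset.sum_nonneg fun j _ => hw j r
  · refine ⟨l, _, fun j => ?_, hXv⟩
    rw [mulVec_natAdd_eq_of_dotProduct_eq_zero hD fun u hu =>
      dotProduct_eq_zero_of_modeProd_eq_sum_Md hd hw hXw hu j]
    exact hw j

end IdentityBlock

lemma le_tInner_sum_Md {d n l : ℕ} {c : ℝ} {T : Tensor d n} {a : Fin n → ℝ}
    {v : Fin l → Fin n → ℝ} (ha : tInner (∑ j, Md d (v j)) (Md d a) = 1)
    (hv : ∀ j, c * (v j ⬝ᵥ a) ^ d ≤ tInner T (Md d (v j))) :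
    c ≤ tInner T (∑ j, Md d (v j)) := by
  simp only [tInner_sum_left, tInner_Md_Md] at ha
  rw [tInner_comm, tInner_sum_left]
  calc c = ∑ j, c * (v j ⬝ᵥ a) ^ d := by rw [← Finset.mul_sum, ha, mul_one]
    _ ≤ ∑ j, tInner (Md d (v j)) T :=
      Finset.sum_le_sum fun j _ => (hv j).trans_eq (tInner_comm _ _)

lemma tInner_Md_nonneg_of_mem_recCone {d n : ℕ} (hd : d ≠ 0) {T : Tensor d n}
    {F : Set (Fin n → ℝ)} {xb z : Fin n → ℝ} (hxb : xb ∈ F)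
    (hmin : IsMinOn (fun x => tInner T (Md d x)) F xb) (hz : z ∈ recCone F) :
    0 ≤ tInner T (Md d z) := by
  set g := fun x : Fin n → ℝ => tInner T (Md d x)
  by_contra! hgz
  -- `g (xb + μ • z) = μ ^ d * g (μ⁻¹ • xb + z)`, and the second factor tends to `g z < 0`
  have hlim : Filter.Tendsto (fun μ : ℝ => μ ^ d * g (μ⁻¹ • xb + z)) Filter.atTop Filter.atBot := by
    refine Filter.Tendsto.atTop_mul_neg hgz (Filter.tendsto_pow_atTop hd)
      ((continuous_tInner_Md T).tendsto z |>.comp ?_)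
    simpa using ((tendsto_inv_atTop_zero (𝕜 := ℝ)).smul_const xb).add_const z
  obtain ⟨μ, hμ, hμ1⟩ := ((hlim.eventually (Filter.eventually_lt_atBot (g xb))).and
    (Filter.eventually_gt_atTop 0)).exists
  have hsplit : xb + μ • z = μ • (μ⁻¹ • xb + z) := by
    rw [smul_add, smul_smul, mul_inv_cancel₀ hμ1.ne', one_smul]
  have hle := isMinOn_iff.mp hmin _ (hz xb hxb μ hμ1.le)
  simp only [g, hsplit, tInner_Md_smul] at hle hμ
  linarith

def polyhedron {m n : ℕ} (B : Matrix (Fin m) (Fin n) ℝ) (b : Fin m → ℝ) : Set (Fin n → ℝ) :=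
  {x | (∀ i, B.mulVec x i ≤ b i) ∧ ∀ j, 0 ≤ x j}

section Polyhedron

variable {m n : ℕ} {B : Matrix (Fin m) (Fin n) ℝ} {b : Fin m → ℝ}

lemma mem_recCone_polyhedron {z : Fin n → ℝ} (hz : 0 ≤ z) (hBz : B *ᵥ z ≤ 0) :
    z ∈ recCone (polyhedron B b) := by
  rintro x ⟨hBx, hx⟩ μ hμ
  refine ⟨fun i => ?_, fun j => add_nonneg (hx j) (mul_nonneg hμ (hz j))⟩
  have := mul_nonpos_of_nonneg_of_nonpos hμ (hBz i)
  simp only [mulVec_add, mulVec_smul, Pi.add_apply, Pi.smul_apply, smul_eq_mul]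
  linarith [hBx i]

lemma smul_mem_polyhedron {z : Fin n → ℝ} {lam : ℝ} (hlam : 0 < lam) (hz : 0 ≤ z)
    (hBz : B *ᵥ z ≤ lam • b) : lam⁻¹ • z ∈ polyhedron B b := by
  refine ⟨fun i => ?_, fun j => mul_nonneg (inv_nonneg.mpr hlam.le) (hz j)⟩
  rw [mulVec_smul, Pi.smul_apply, smul_eq_mul, inv_mul_le_iff₀ hlam]
  exact hBz i

/-- Dehomogenization: a nonnegative `(z, λ)` with `B z ≤ λ b` is `λ` times a point of the
polyhedron when `λ > 0`, and a recession direction when `λ = 0`. -/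
lemma mul_pow_le_of_isMinOn_polyhedron {d : ℕ} {T : Tensor d n} {xb z : Fin n → ℝ} {lam : ℝ}
    (hxb : xb ∈ polyhedron B b) (hmin : IsMinOn (fun x => tInner T (Md d x)) (polyhedron B b) xb)
    (hz : 0 ≤ z) (hlam : 0 ≤ lam) (hBz : B *ᵥ z ≤ lam • b) :
    tInner T (Md d xb) * lam ^ d ≤ tInner T (Md d z) := by
  rcases hlam.eq_or_lt with rfl | hpos
  · rcases eq_or_ne d 0 with rfl | hd
    · have hMd : Md 0 xb = Md 0 z := funext fun _ => by simp [Md]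
      rw [pow_zero, mul_one, hMd]
    · rw [zero_pow hd, mul_zero]
      exact tInner_Md_nonneg_of_mem_recCone hd hxb hmin
        (mem_recCone_polyhedron hz (by simpa using hBz))
  · have h := isMinOn_iff.mp hmin _ (smul_mem_polyhedron hpos hz hBz)
    rw [tInner_Md_smul, inv_pow] at h
    calc tInner T (Md d xb) * lam ^ d ≤ (lam ^ d)⁻¹ * tInner T (Md d z) * lam ^ d := by gcongr
      _ = tInner T (Md d z) := by field_simp

end Polyhedron

lemma snoc_dotProduct {n : ℕ} (u : Fin n → ℝ) (c : ℝ) (v : Fin (n+1) → ℝ) :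
    (Fin.snoc u c : Fin (n+1) → ℝ) ⬝ᵥ v = u ⬝ᵥ Fin.init v + c * v (Fin.last n) := by
  simp [dotProduct, Fin.sum_univ_castSucc, Fin.init]

lemma snoc_nonneg {n : ℕ} {u : Fin n → ℝ} {c : ℝ} (hu : 0 ≤ u) (hc : 0 ≤ c) :
    0 ≤ (Fin.snoc u c : Fin (n+1) → ℝ) :=
  fun i => Fin.lastCases (by simpa using hc) (fun j => by simpa using hu j) i

lemma mulVec_castAdd_of_homogenization {m n : ℕ} {B : Matrix (Fin m) (Fin n) ℝ} {b : Fin m → ℝ}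
    {a : Fin (n+1) → ℝ} {A : Matrix (Fin (m + (n+1))) (Fin (n+1)) ℝ}
    (hA1 : ∀ (i : Fin m) (j : Fin (n+1)),
      A (Fin.castAdd (n+1) i) j = b i * a j - (Fin.snoc (B i) 0 : Fin (n+1) → ℝ) j)
    (v : Fin (n+1) → ℝ) (i : Fin m) :
    (A *ᵥ v) (Fin.castAdd (n+1) i) = b i * (a ⬝ᵥ v) - (B *ᵥ Fin.init v) i := by
  have h : (A *ᵥ v) (Fin.castAdd (n+1) i)
      = b i * (a ⬝ᵥ v) - (Fin.snoc (B i) 0 : Fin (n+1) → ℝ) ⬝ᵥ v := by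
    simp only [mulVec, dotProduct, hA1, sub_mul, Finset.sum_sub_distrib, mul_assoc,
      ← Finset.mul_sum]
  rw [h, snoc_dotProduct, zero_mul, add_zero]
  rfl

lemma mul_pow_le_of_mulVec_nonneg {d m n : ℕ} {B : Matrix (Fin m) (Fin n) ℝ} {b : Fin m → ℝ}
    {a : Fin (n+1) → ℝ} {A : Matrix (Fin (m + (n+1))) (Fin (n+1)) ℝ}
    (hA1 : ∀ (i : Fin m) (j : Fin (n+1)),
      A (Fin.castAdd (n+1) i) j = b i * a j - (Fin.snoc (B i) 0 : Fin (n+1) → ℝ) j)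
    (hA2 : ∀ (i j : Fin (n+1)), A (Fin.natAdd m i) j = if i = j then 1 else 0) (ha : 0 ≤ a)
    {T : Tensor d n} {xb : Fin n → ℝ} (hxb : xb ∈ polyhedron B b)
    (hmin : IsMinOn (fun x => tInner T (Md d x)) (polyhedron B b) xb) {v : Fin (n+1) → ℝ}
    (hv : 0 ≤ A *ᵥ v) :
    tInner T (Md d xb) * (v ⬝ᵥ a) ^ d ≤ tInner T (Md d (Fin.init v)) := by
  have hv0 : 0 ≤ v := fun x => mulVec_natAdd_of_identity_block hA2 v x ▸ hv _
  rw [dotProduct_comm]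
  refine mul_pow_le_of_isMinOn_polyhedron hxb hmin (fun j => hv0 _)
    (dotProduct_nonneg_of_nonneg ha hv0) fun i => ?_
  have h := hv (Fin.castAdd (n+1) i)
  rw [Pi.zero_apply, mulVec_castAdd_of_homogenization hA1] at h
  rw [Pi.smul_apply, smul_eq_mul]
  linarith

theorem homogeneous_CPTP_same_value_general {d : ℕ}
{m n : ℕ} (B : Matrix (Fin m) (Fin n) ℝ) (b : Fin m → ℝ)
    (F : Set (Fin n → ℝ))
    (hF : F = {x | (∀ i, B.mulVec x i ≤ b i) ∧ ∀ j, 0 ≤ x j})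
    (al : Fin n → ℝ) (hal : ∀ j, 0 ≤ al j) (halF : ∀ x ∈ F, al ⬝ᵥ x ≤ 1)
    (a : Fin (n+1) → ℝ) (ha : a = Fin.snoc al 1)
    (A : Matrix (Fin (m + (n+1))) (Fin (n+1)) ℝ)
    (hA1 : ∀ (i : Fin m) (j : Fin (n+1)),
      A (Fin.castAdd (n+1) i) j = b i * a j - (Fin.snoc (B i) 0 : Fin (n+1) → ℝ) j)
    (hA2 : ∀ (i j : Fin (n+1)), A (Fin.natAdd m i) j = if i = j then 1 else 0)
    (Ah : Tensor d n)
    (f : (Fin n → ℝ) → ℝ) (hf : ∀ x, f x = tInner Ah (Md d x))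
    (Abar : Tensor d (n+1))
    (hAbar : ∀ i : Fin d → Fin (n+1),
      Abar i = if h : ∀ t, ((i t : ℕ) < n) then Ah (fun t => ⟨i t, h t⟩) else 0)
    (xbar : Fin n → ℝ) (hx : xbar ∈ F) (hxopt : ∀ x ∈ F, f xbar ≤ f x) :
    sInf (tInner Abar '' {X | X ∈ CP d (n+1) ∧ tInner X (Md d a) = 1 ∧
      modeProd X A ∈ CP d (m + (n+1))}) = f xbar := by
  subst hF ha
  have hmin : IsMinOn (fun x => tInner Ah (Md d x)) (polyhedron B b) xbar :=
    isMinOn_iff.mpr fun x hx' => by simpa only [hf] using hxopt x hx'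
  have hbound : ∀ v, 0 ≤ A *ᵥ v → f xbar * (v ⬝ᵥ Fin.snoc al 1) ^ d ≤ tInner Abar (Md d v) :=
    fun v hv => by
      rw [hf, tInner_zeroPad_Md hAbar]
      exact mul_pow_le_of_mulVec_nonneg hA1 hA2 (snoc_nonneg hal zero_le_one) hx hmin hv
  set y : Fin (n+1) → ℝ := Fin.snoc xbar (1 - al ⬝ᵥ xbar)
  have hay : Fin.snoc al 1 ⬝ᵥ y = 1 := by simp [y, snoc_dotProduct, Fin.init_snoc]
  have hy0 : 0 ≤ y := snoc_nonneg hx.2 (sub_nonneg.mpr (halF xbar hx))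
  have hAy : 0 ≤ A *ᵥ y := by
    refine fun r => Fin.addCases (fun i => ?_) (fun x => ?_) r
    · simp [mulVec_castAdd_of_homogenization hA1, hay, y, Fin.init_snoc, hx.1 i]
    · exact (mulVec_natAdd_of_identity_block hA2 y x).symm ▸ hy0 x
  refine IsLeast.csInf_eq ⟨⟨Md d y, ⟨Md_mem_CP hy0, ?_, modeProd_Md y A ▸ Md_mem_CP hAy⟩, ?_⟩, ?_⟩
  · rw [tInner_Md_Md, dotProduct_comm, hay, one_pow]
  · rw [tInner_zeroPad_Md hAbar, hf, Fin.init_snoc]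
  · rintro _ ⟨X, ⟨-, hXa, hXA⟩, rfl⟩
    obtain ⟨l, v, hv, rfl⟩ := exists_eq_sum_Md_of_modeProd_mem_CP hA2 hXA
    exact le_tInner_sum_Md hXa fun j => hbound _ (hv j)

/-- The homogeneous POP over `F = {x : Bx ≤ b, x ≥ 0}` is equivalent to a
completely positive tensor program: the optimal values coincide. -/
theorem homogeneous_CPTP_same_value {d : ℕ}
{m n : ℕ} (B : Matrix (Fin m) (Fin n) ℝ) (b : Fin m → ℝ)
    (F : Set (Fin n → ℝ))
    (hF : F = {x | (∀ i, B.mulVec x i ≤ b i) ∧ ∀ j, 0 ≤ x j})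
    (al : Fin n → ℝ) (hal : ∀ j, 0 ≤ al j) (halF : ∀ x ∈ F, al ⬝ᵥ x ≤ 1)
    (a : Fin (n+1) → ℝ) (ha : a = Fin.snoc al 1)
    (A : Matrix (Fin (m + (n+1))) (Fin (n+1)) ℝ)
    (hA1 : ∀ (i : Fin m) (j : Fin (n+1)),
      A (Fin.castAdd (n+1) i) j = b i * a j - (Fin.snoc (B i) 0 : Fin (n+1) → ℝ) j)
    (hA2 : ∀ (i j : Fin (n+1)), A (Fin.natAdd m i) j = if i = j then 1 else 0)
    (Fb : Set (Fin (n+1) → ℝ))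
    (hFb : Fb = {y | (∀ i, 0 ≤ A.mulVec y i) ∧ a ⬝ᵥ y = 1})
    (Ah : Tensor d n) (hsym : IsSymT Ah)
    (f : (Fin n → ℝ) → ℝ) (hf : ∀ x, f x = tInner Ah (Md d x))
    (Abar : Tensor d (n+1))
    (hAbar : ∀ i : Fin d → Fin (n+1),
      Abar i = if h : ∀ t, ((i t : ℕ) < n) then Ah (fun t => ⟨i t, h t⟩) else 0)
    (xbar : Fin n → ℝ) (hx : xbar ∈ F) (hxopt : ∀ x ∈ F, f xbar ≤ f x) :
    sInf (tInner Abar '' {X | X ∈ CP d (n+1) ∧ tInner X (Md d a) = 1 ∧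
      modeProd X A ∈ CP d (m + (n+1))}) = f xbar :=
  homogeneous_CPTP_same_value_general B b F hF al hal halF a ha A hA1 hA2 Ah f hf Abar hAbar xbar hx
    hxopt
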